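/- Trace bound for the Ky Fan k-norm of a positive semidefinite matrix: if A is an n×n positive semidefinite Hermitian matrix and k ∈ {1,...,n}, then the sum of the k largest eigenvalues of A is at most Tr(A)·k/n + √((n−k)·k/n)·√(Tr(A²) − Tr(A)²/n); in particular, Σ_{j=1}^k λ_j(A) ≤ (k/n)·Tr(A) + √((n−k)k/n · Tr(A²)). -/

import Mathlib

open Finset
open scoped ComplexOrder

/-!
Writing `λ` for the eigenvalue vector and `𝟙_T` for the indicator of a `k`-set `T` of indices,
`∑_{j ∈ T} λ_j - (k/n) Tr A` is the empirical covariance of `𝟙_T` and `λ`. By Cauchy–Schwarz it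
is at most the product of their standard deviations, `√((n-k)k/n)` and
`√(∑ λ_j² - (∑ λ_j)²/n) = √(Tr A² - (Tr A)²/n)`.
-/

/-- The sum of the `k` largest eigenvalues of a Hermitian matrix (the Ky Fan
`k`-norm of a positive semidefinite matrix). -/
noncomputable def sumKLargestEigenvalues {n : ℕ} {A : Matrix (Fin n) (Fin n) ℂ}
    (hA : A.IsHermitian) (k : ℕ) : ℝ :=
  ⨆ T : {T : Finset (Fin n) // T.card = k}, ∑ j ∈ T.1, hA.eigenvalues j

section Covariance

open Fintype Real

variable {ι : Type*} [Fintype ι]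

theorem sum_sub_mean_mul_sub_mean (a b : ι → ℝ) :
    ∑ i, (a i - (∑ j, a j) / card ι) * (b i - (∑ j, b j) / card ι) =
      ∑ i, a i * b i - (∑ i, a i) * (∑ i, b i) / card ι := by
  rcases isEmpty_or_nonempty ι with _ | _
  · simp
  have hn : (card ι : ℝ) ≠ 0 := by positivity
  simp only [sub_mul, mul_sub, sum_sub_distrib, ← sum_mul, ← mul_sum, sum_const, card_univ,
    nsmul_eq_mul]
  field_simp
  ring

theorem sum_sq_sub_mean (a : ι → ℝ) :
    ∑ i, (a i - (∑ j, a j) / card ι) ^ 2 = ∑ i, a i ^ 2 - (∑ i, a i) ^ 2 / card ι := by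
  simpa only [← sq] using sum_sub_mean_mul_sub_mean a a

theorem sum_mul_sub_sum_mul_sum_div_card_le (a b : ι → ℝ) :
    ∑ i, a i * b i - (∑ i, a i) * (∑ i, b i) / card ι ≤
      √(∑ i, a i ^ 2 - (∑ i, a i) ^ 2 / card ι) * √(∑ i, b i ^ 2 - (∑ i, b i) ^ 2 / card ι) := by
  rw [← sum_sub_mean_mul_sub_mean, ← sum_sq_sub_mean, ← sum_sq_sub_mean]
  exact sum_mul_le_sqrt_mul_sqrt univ _ _

theorem sum_le_card_div_mul_sum_add_sqrt_mul_sqrt (x : ι → ℝ) (T : Finset ι) :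
    ∑ i ∈ T, x i ≤ #T / card ι * ∑ i, x i +
      √((card ι - #T) * #T / card ι) * √(∑ i, x i ^ 2 - (∑ i, x i) ^ 2 / card ι) := by
  rcases isEmpty_or_nonempty ι with _ | _
  · simp [T.eq_empty_of_isEmpty]
  classical
  have hn : (card ι : ℝ) ≠ 0 := by positivity
  have h := sum_mul_sub_sum_mul_sum_div_card_le (fun i => if i ∈ T then 1 else 0) x
  simp only [ite_pow, one_pow, zero_pow two_ne_zero, ite_mul, one_mul, zero_mul,
    Fintype.sum_ite_mem, sum_const, nsmul_eq_mul, mul_one] at h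
  have hvar : (#T : ℝ) - #T ^ 2 / card ι = (card ι - #T) * #T / card ι := by
    field_simp
  rw [hvar, mul_div_right_comm] at h
  linarith

theorem sum_le_card_div_mul_sum_add_sqrt (x : ι → ℝ) (T : Finset ι) :
    ∑ i ∈ T, x i ≤ #T / card ι * ∑ i, x i + √((card ι - #T) * #T / card ι * ∑ i, x i ^ 2) := by
  refine (sum_le_card_div_mul_sum_add_sqrt_mul_sqrt x T).trans ?_
  rw [sqrt_mul' _ (sum_nonneg fun i _ => sq_nonneg (x i))]
  gcongr
  exact sub_le_self _ (by positivity)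

end Covariance

theorem Matrix.IsHermitian.trace_mul_self_eq_sum_sq_eigenvalues {𝕜 n : Type*} [RCLike 𝕜]
    [Fintype n] [DecidableEq n] {A : Matrix n n 𝕜} (hA : A.IsHermitian) :
    (A * A).trace = ∑ i, (hA.eigenvalues i : 𝕜) ^ 2 := by
  conv_lhs => rw [hA.spectral_theorem]
  rw [← map_mul, Unitary.conjStarAlgAut_apply, trace_mul_cycle, Unitary.coe_star_mul_self,
    Matrix.one_mul, diagonal_mul_diagonal, trace_diagonal]
  simp [sq]

theorem sum_k_largest_eigenvalues_trace_bound_general {n : ℕ}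
    (A : Matrix (Fin n) (Fin n) ℂ) (hA : A.PosSemidef)
    (k : ℕ) :
    sumKLargestEigenvalues hA.1 k ≤
        ((k : ℝ) / n) * A.trace.re +
          Real.sqrt (((n : ℝ) - k) * k / n) *
            Real.sqrt ((A * A).trace.re - A.trace.re ^ 2 / n) ∧
      sumKLargestEigenvalues hA.1 k ≤
        ((k : ℝ) / n) * A.trace.re +
          Real.sqrt (((n : ℝ) - k) * k / n * (A * A).trace.re) := by
  have htr : A.trace.re = ∑ i, hA.1.eigenvalues i := by
    simp [hA.1.trace_eq_sum_eigenvalues]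
  have htr2 : (A * A).trace.re = ∑ i, hA.1.eigenvalues i ^ 2 := by
    simp [hA.1.trace_mul_self_eq_sum_sq_eigenvalues, ← Complex.ofReal_pow]
  have htr_nonneg : 0 ≤ ∑ i, hA.1.eigenvalues i := sum_nonneg fun i _ => hA.eigenvalues_nonneg i
  rw [htr, htr2]
  -- When `k > n` the supremum is over an empty family, hence `0`: the bound must be nonnegative.
  constructor <;>
    refine Real.iSup_le (fun ⟨T, hT⟩ => ?_) (add_nonneg (by positivity) (by positivity))
  · simpa [hT] using sum_le_card_div_mul_sum_add_sqrt_mul_sqrt hA.1.eigenvalues T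
  · simpa [hT] using sum_le_card_div_mul_sum_add_sqrt hA.1.eigenvalues T

/-- **Wolkowicz–Styan-type trace bound for the Ky Fan `k`-norm of a PSD matrix**:
if `A` is `n×n` positive semidefinite Hermitian and `k ∈ {1,…,n}`, then
`∑_{j≤k} λ_j(A) ≤ (k/n)·Tr(A) + √((n−k)k/n)·√(Tr(A²) − Tr(A)²/n)`, and in
particular `∑_{j≤k} λ_j(A) ≤ (k/n)·Tr(A) + √((n−k)k/n · Tr(A²))`. -/
theorem sum_k_largest_eigenvalues_trace_bound {n : ℕ} (hn : 1 ≤ n)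
    (A : Matrix (Fin n) (Fin n) ℂ) (hA : A.PosSemidef)
    (k : ℕ) (hk1 : 1 ≤ k) (hkn : k ≤ n) :
    sumKLargestEigenvalues hA.1 k ≤
        ((k : ℝ) / n) * A.trace.re +
          Real.sqrt (((n : ℝ) - k) * k / n) *
            Real.sqrt ((A * A).trace.re - A.trace.re ^ 2 / n) ∧
      sumKLargestEigenvalues hA.1 k ≤
        ((k : ℝ) / n) * A.trace.re +
          Real.sqrt (((n : ℝ) - k) * k / n * (A * A).trace.re) :=
  sum_k_largest_eigenvalues_trace_bound_general A hA k
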